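/- arXiv:2510.06420 — 3 statements merged into one kernel-verified Lean document; each statement's English description precedes it below -/
import Mathlib

section
/- Fix a type α of nodes and consider triples (D, A, F) of sets of elements of α. Define a one-step update relation Step on such triples by: (D, A, F) Step (D', A', F') if and only if one of the following holds: (activate-delays) there exists S ⊆ D with D' = D \ S, A' = A ∪ S, F' = F; (fire-triggered) there exist T ⊆ A and sets C₁, C₂ with C₁ ∩ C₂ = ∅ and (C₁ ∪ C₂) ∩ (D ∪ A ∪ F) = ∅ such that D' = D ∪ C₁, A' = (A ∪ C₂) \ T, F' = F ∪ T; (fire-loop-count, nonzero counter) there exist l ∈ A and n ∉ D ∪ A ∪ F such that either D' = D, A' = (A ∪ {n}) \ {l}, F' = F, or D' = D ∪ {n}, A' = A \ {l}, F' = F; (fire-loop-count, zero counter) there exist l ∈ A and e with e ∉ D and e ∉ F such that D' = D, A' = (A ∪ {e}) \ {l}, F' = F ∪ {l}; (reset/garbage-collection) there exists a set R with D' = D \ R, A' = A \ R, F' = F \ R. Then: if D₀, A₀, F₀ are pairwise disjoint and (D₀, A₀, F₀) is related to (D, A, F) by the reflexive-transitive closure of Step, then D, A, F are pairwise disjoint.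 -/
/-- The one-step update relation on execution states (D, A, F) of an EL
graph, covering the subprocedures activateDelays, fireTriggered,
fireLoopCounts (nonzero and zero counter cases), and the resetting /
garbage-collection steps. -/
def ELStep {α : Type*} (p p' : Set α × Set α × Set α) : Prop :=
  -- activate-delays
  (∃ S ⊆ p.1, p'.1 = p.1 \ S ∧ p'.2.1 = p.2.1 ∪ S ∧ p'.2.2 = p.2.2) ∨
  -- fire-triggered
  (∃ T ⊆ p.2.1, ∃ C₁ C₂ : Set α,
    C₁ ∩ C₂ = ∅ ∧ (C₁ ∪ C₂) ∩ (p.1 ∪ p.2.1 ∪ p.2.2) = ∅ ∧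
    p'.1 = p.1 ∪ C₁ ∧ p'.2.1 = (p.2.1 ∪ C₂) \ T ∧ p'.2.2 = p.2.2 ∪ T) ∨
  -- fire-loop-count, nonzero counter
  (∃ l ∈ p.2.1, ∃ n, n ∉ p.1 ∪ p.2.1 ∪ p.2.2 ∧
    ((p'.1 = p.1 ∧ p'.2.1 = (p.2.1 ∪ {n}) \ {l} ∧ p'.2.2 = p.2.2) ∨
     (p'.1 = p.1 ∪ {n} ∧ p'.2.1 = p.2.1 \ {l} ∧ p'.2.2 = p.2.2))) ∨
  -- fire-loop-count, zero counter
  (∃ l ∈ p.2.1, ∃ e, e ∉ p.1 ∧ e ∉ p.2.2 ∧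
    p'.1 = p.1 ∧ p'.2.1 = (p.2.1 ∪ {e}) \ {l} ∧ p'.2.2 = p.2.2 ∪ {l}) ∨
  -- reset / garbage collection
  (∃ R : Set α, p'.1 = p.1 \ R ∧ p'.2.1 = p.2.1 \ R ∧ p'.2.2 = p.2.2 \ R)


def ELInv {α : Type*} (p : Set α × Set α × Set α) : Prop :=
  p.1 ∩ p.2.1 = ∅ ∧ p.1 ∩ p.2.2 = ∅ ∧ p.2.1 ∩ p.2.2 = ∅

lemma elStep_inv {α : Type*} {p p' : Set α × Set α × Set α}
    (h : ELStep p p') (hp : ELInv p) : ELInv p' := by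
  obtain ⟨D, A, F⟩ := p
  obtain ⟨D', A', F'⟩ := p'
  obtain ⟨h1, h2, h3⟩ := hp
  simp only [ELStep, ELInv] at *
  rcases h with ⟨S, hS, e1, e2, e3⟩ |
    ⟨T, hT, C₁, C₂, hC, hCD, e1, e2, e3⟩ |
    ⟨l, hl, n, hn, ⟨e1, e2, e3⟩ | ⟨e1, e2, e3⟩⟩ |
    ⟨l, hl, e, he1, he2, e1, e2, e3⟩ |
    ⟨R, e1, e2, e3⟩ <;>
  subst e1 e2 e3 <;>
  simp only [Set.eq_empty_iff_forall_notMem, Set.mem_inter_iff, Set.mem_union,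
    Set.mem_diff, Set.mem_singleton_iff, Set.subset_def, not_and, not_or] at * <;>
  refine ⟨fun x => ?_, fun x => ?_, fun x => ?_⟩ <;>
  (intro hx; try specialize hS x; try specialize hT x;
   try specialize hC x; try specialize hCD x;
   specialize h1 x; specialize h2 x; specialize h3 x;
   first | tauto | aesop)

/-- Theorem 1 of the paper: pairwise disjointness of the
delayed, active, and fired sets is preserved by the reflexive-transitive
closure of the one-step update relation. -/
theorem elStep_preserves_disjoint {α : Type*}
    (D₀ A₀ F₀ D A F : Set α)
    (h₀ : D₀ ∩ A₀ = ∅ ∧ D₀ ∩ F₀ = ∅ ∧ A₀ ∩ F₀ = ∅)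
    (hsteps : Relation.ReflTransGen ELStep (D₀, A₀, F₀) (D, A, F)) :
    D ∩ A = ∅ ∧ D ∩ F = ∅ ∧ A ∩ F = ∅ := by
  have key : ∀ q : Set α × Set α × Set α, Relation.ReflTransGen ELStep q (D, A, F) →
      ELInv q → ELInv (D, A, F) := by
    intro q hq
    induction hq using Relation.ReflTransGen.head_induction_on with
    | refl => exact fun h => h
    | head hstep _ ih => exact fun h => ih (elStep_inv hstep h)
  exact key _ hsteps h₀
end

section
/- Let r be a binary relation on a type α, let l : List α be a nonempty r-chain with last element k, and let S and T be sets of elements of α with T ⊆ S and k ∉ T. If some element of l belongs to S, then some element of l belongs to the set (S \ T) ∪ { m | there exists n ∈ T with r n m }. -/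
theorem List.IsChain.exists_rel_of_mem_of_ne_getLast {α : Type*} {r : α → α → Prop}
    {l : List α} (hl : l.IsChain r) (hne : l ≠ []) {a : α} (ha : a ∈ l)
    (hlast : a ≠ l.getLast hne) : ∃ b ∈ l, r a b := by
  induction hl with
  | nil => simp at ha
  | singleton x => simp_all
  | @cons_cons x y l hxy _ ih =>
    rcases List.mem_cons.mp ha with rfl | ha
    · exact ⟨y, by simp, hxy⟩
    · obtain ⟨b, hb, hab⟩ := ih (by simp) ha (by simpa using hlast)
      exact ⟨b, List.mem_cons_of_mem x hb, hab⟩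

theorem chain'_inter_fire_preserved_general {α : Type*} (r : α → α → Prop)
    (l : List α) (hne : l ≠ []) (hl : List.Chain' r l)
    (k : α) (hk : l.getLast hne = k)
    (S T : Set α) (hkT : k ∉ T)
    (hint : ∃ n ∈ l, n ∈ S) :
    ∃ m ∈ l, m ∈ (S \ T) ∪ { m | ∃ n ∈ T, r n m } := by
  obtain ⟨n, hnl, hnS⟩ := hint
  by_cases hnT : n ∈ T
  · have hn_ne_last : n ≠ l.getLast hne := hk ▸ ne_of_mem_of_not_mem hnT hkT
    obtain ⟨m, hml, hnm⟩ := hl.exists_rel_of_mem_of_ne_getLast hne hnl hn_ne_last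
    exact ⟨m, hml, Or.inr ⟨n, hnT, hnm⟩⟩
  · exact ⟨n, hnl, Or.inl ⟨hnS, hnT⟩⟩

/-- if a nonempty r-chain with last element k intersects S,
T ⊆ S, and k ∉ T, then the chain intersects (S \ T) ∪ (r-successors of T). -/
theorem chain'_inter_fire_preserved {α : Type*} (r : α → α → Prop)
    (l : List α) (hne : l ≠ []) (hl : List.Chain' r l)
    (k : α) (hk : l.getLast hne = k)
    (S T : Set α) (hTS : T ⊆ S) (hkT : k ∉ T)
    (hint : ∃ n ∈ l, n ∈ S) :
    ∃ m ∈ l, m ∈ (S \ T) ∪ { m | ∃ n ∈ T, r n m } :=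
  chain'_inter_fire_preserved_general r l hne hl k hk S T hkT hint
end

section
/- Let α be a finite type and let r be an acyclic relation on α. For a : α, call a nonempty list l : List α a maximal path from a if its head is a, consecutive entries of l are related by r (List.Chain' r l), and the last entry of l has no r-successor; let σ(a) denote the sum of the lengths of all maximal paths from a (a finite sum, since there are only finitely many r-chains). Then for every a : α that has at least one r-successor, the sum of σ(c) over all r-successors c of a is strictly less than σ(a). -/
/-- A maximal path from `a`: a nonempty list headed by `a` whose
consecutive entries are related by `r` and whose last entry has no
`r`-successor. -/
def IsMaximalPath {α : Type*} (r : α → α → Prop) (a : α) (l : List α) : Prop :=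
  l.head? = some a ∧ List.Chain' r l ∧ ∀ b ∈ l.getLast?, ∀ c : α, ¬ r b c

/-- `pathSum r a` is the sum of the lengths of all maximal paths from `a`
(a finite sum when `α` is finite and `r` is acyclic, since then there are
only finitely many `r`-chains). -/
noncomputable def pathSum {α : Type*} (r : α → α → Prop) (a : α) : ℕ :=
  ∑ᶠ l ∈ { l : List α | IsMaximalPath r a l }, l.length

/-!
Since `a` has a successor, a maximal path from `a` is `a :: t` with `t` a maximal path from a
unique successor `c` of `a`, so `pathSum r a = ∑ c, ∑ t, (t.length + 1)` with `t` running over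
the maximal paths from `c`. Each inner sum exceeds `pathSum r c` because every node has a maximal
path: following successors must stop, as an acyclic relation on a finite type has well-founded
converse.
-/

theorem finsum_mem_lt_finsum_mem_of_nonempty {ι M : Type*} [AddCommMonoid M] [PartialOrder M]
    [IsOrderedCancelAddMonoid M] {f g : ι → M} {s : Set ι} (hs : s.Finite) (hne : s.Nonempty)
    (hlt : ∀ i ∈ s, f i < g i) : ∑ᶠ i ∈ s, f i < ∑ᶠ i ∈ s, g i := by
  rw [finsum_mem_eq_finite_toFinset_sum _ hs, finsum_mem_eq_finite_toFinset_sum _ hs]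
  exact Finset.sum_lt_sum_of_nonempty (by simpa) (by simpa)

namespace IsMaximalPath

variable {α : Type*} {r : α → α → Prop} {a c : α} {l : List α}

theorem cons (hac : r a c) (hl : IsMaximalPath r c l) : IsMaximalPath r a (a :: l) := by
  obtain ⟨hhead, hchain, hlast⟩ := hl
  cases l with
  | nil => simp at hhead
  | cons c' t =>
    obtain rfl : c' = c := by simpa using hhead
    exact ⟨rfl, List.isChain_cons_cons.2 ⟨hac, hchain⟩, by simpa using hlast⟩

theorem exists_cons (hl : IsMaximalPath r a l) (ha : ∃ c, r a c) :
    ∃ c, r a c ∧ ∃ t, IsMaximalPath r c t ∧ a :: t = l := by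
  obtain ⟨hhead, hchain, hlast⟩ := hl
  match l, ha with
  | [], _ => simp at hhead
  | [a'], ⟨c, hac⟩ =>
    obtain rfl : a' = a := by simpa using hhead
    exact absurd hac (hlast a' rfl c)
  | a' :: c :: t, _ =>
    obtain rfl : a' = a := by simpa using hhead
    obtain ⟨hac, hchain⟩ := List.isChain_cons_cons.1 hchain
    exact ⟨c, hac, c :: t, ⟨rfl, hchain, by simpa using hlast⟩, rfl⟩

theorem nodup (hacyc : ∀ a : α, ¬ Relation.TransGen r a a) (hl : IsMaximalPath r a l) :
    l.Nodup :=
  have : Std.Irrefl (Relation.TransGen r) := ⟨hacyc⟩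
  (hl.2.1.imp fun _ _ => Relation.TransGen.single).pairwise.nodup

theorem head_unique (hl : IsMaximalPath r a l) (hl' : IsMaximalPath r c l) : a = c :=
  Option.some_injective _ (hl.1.symm.trans hl'.1)

end IsMaximalPath

section

variable {α : Type*} {r : α → α → Prop}

theorem isMaximalPath_singleton {a : α} (ha : ∀ c, ¬ r a c) : IsMaximalPath r a [a] :=
  ⟨rfl, List.isChain_singleton a, by simpa using ha⟩

theorem setOf_isMaximalPath_finite [Finite α] (hacyc : ∀ a : α, ¬ Relation.TransGen r a a)
    (a : α) : {l | IsMaximalPath r a l}.Finite :=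
  (List.finite_length_le α (Nat.card α)).subset fun _ hl => (hl.nodup hacyc).length_le_natCard

theorem wellFounded_swap_of_acyclic [Finite α] (hacyc : ∀ a : α, ¬ Relation.TransGen r a a) :
    WellFounded (Function.swap r) :=
  have : Std.Irrefl (Function.swap (Relation.TransGen r)) := ⟨hacyc⟩
  (Finite.wellFounded_of_trans_of_irrefl (Function.swap (Relation.TransGen r))).mono
    fun _ _ h => Relation.TransGen.single h

theorem exists_isMaximalPath [Finite α] (hacyc : ∀ a : α, ¬ Relation.TransGen r a a) (a : α) :
    ∃ l, IsMaximalPath r a l := by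
  induction a using (wellFounded_swap_of_acyclic hacyc).induction with
  | _ a ih =>
    by_cases h : ∃ c, r a c
    · obtain ⟨c, hac⟩ := h
      obtain ⟨l, hl⟩ := ih c hac
      exact ⟨a :: l, hl.cons hac⟩
    · exact ⟨[a], isMaximalPath_singleton (not_exists.1 h)⟩

theorem setOf_isMaximalPath_eq_biUnion {a : α} (ha : ∃ c, r a c) :
    {l | IsMaximalPath r a l} = ⋃ c ∈ {c | r a c}, List.cons a '' {l | IsMaximalPath r c l} := by
  ext l
  simp only [Set.mem_iUnion, Set.mem_image, Set.mem_ofPred, exists_prop]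
  exact ⟨fun hl => hl.exists_cons ha, fun ⟨_, hac, _, ht, hl⟩ => hl ▸ ht.cons hac⟩

theorem pathSum_eq_finsum_succ [Finite α] (hacyc : ∀ a : α, ¬ Relation.TransGen r a a) {a : α}
    (ha : ∃ c, r a c) :
    pathSum r a = ∑ᶠ c ∈ {c | r a c}, ∑ᶠ l ∈ {l | IsMaximalPath r c l}, (l.length + 1) := by
  have hdisj : {c | r a c}.PairwiseDisjoint fun c => List.cons a '' {l | IsMaximalPath r c l} := by
    rintro c - c' - hne
    refine Set.disjoint_left.2 ?_
    rintro _ ⟨l, hl, rfl⟩ ⟨l', hl', heq⟩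
    exact hne (hl.head_unique (List.cons_injective heq ▸ hl'))
  rw [pathSum, setOf_isMaximalPath_eq_biUnion ha, finsum_mem_biUnion hdisj (Set.toFinite _)
    fun c _ => (setOf_isMaximalPath_finite hacyc c).image _]
  exact finsum_mem_congr rfl fun c _ => finsum_mem_image List.cons_injective.injOn

theorem pathSum_lt_finsum_length_succ [Finite α] (hacyc : ∀ a : α, ¬ Relation.TransGen r a a)
    (a : α) : pathSum r a < ∑ᶠ l ∈ {l | IsMaximalPath r a l}, (l.length + 1) :=
  finsum_mem_lt_finsum_mem_of_nonempty (setOf_isMaximalPath_finite hacyc a)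
    (exists_isMaximalPath hacyc a) fun _ _ => Nat.lt_succ_self _

end

/-- for an acyclic relation on a finite type, if `a` has at
least one successor, then the sum of `pathSum` over the successors of `a`
is strictly less than `pathSum a`. -/
theorem pathSum_succ_lt {α : Type*} [Fintype α] (r : α → α → Prop)
    (hacyc : ∀ a : α, ¬ Relation.TransGen r a a)
    (a : α) (ha : ∃ c : α, r a c) :
    (∑ᶠ c ∈ { c : α | r a c }, pathSum r c) < pathSum r a := by
  rw [pathSum_eq_finsum_succ hacyc ha]
  exact finsum_mem_lt_finsum_mem_of_nonempty (Set.toFinite _) ha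
    fun c _ => pathSum_lt_finsum_length_succ hacyc c
end
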